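/- Let H be any subgroup of a finite group G, θ an irreducible character of H, and χ an irreducible constituent of the induced character θ^G. Then cod(χ) ≥ cod(θ). -/

import Mathlib

open CategoryTheory

/-- The kernel of (the character of) a finite-dimensional complex representation. -/
noncomputable def charKer {G : Type} [Group G] (V : FDRep ℂ G) : Subgroup G :=
  MonoidHom.ker (Representation.asGroupHom V.ρ)

/-- The codegree of a character: `|G : ker χ| / χ(1)`. -/
noncomputable def codeg {G : Type} [Group G] (V : FDRep ℂ G) : ℕ :=
  (charKer V).index / Module.finrank ℂ V

/-- The set of codegrees of irreducible characters of `G`. -/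
def codSet (G : Type) [Group G] : Set ℕ :=
  {n | ∃ V : FDRep ℂ G, Simple V ∧ codeg V = n}

/-- Inner product of class functions on a finite group. -/
noncomputable def innerChar (G : Type) [Group G] (f g : G → ℂ) : ℂ :=
  (∑ᶠ x : G, f x * starRingEnd ℂ (g x)) / Nat.card G

open scoped Classical in
/-- The induced character `θ^G` of a character `θ` of a subgroup `H ≤ G`. -/
noncomputable def indChar {G : Type} [Group G] (H : Subgroup G) (θ : FDRep ℂ ↥H) : G → ℂ :=
  fun g => (∑ᶠ x : G, if h : x * g * x⁻¹ ∈ H then θ.character ⟨x * g * x⁻¹, h⟩ else 0) /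
    Nat.card ↥H

/-!
Frobenius reciprocity turns `⟨θ^G, χ⟩ ≠ 0` into a nonzero, hence injective, `H`-map `θ → χ|_H`.
Its image `W` is stabilized by `J = H ⊔ ker χ`, and since `χ` is irreducible the translates of `W`
by representatives of `G / J` span `χ`, so `χ(1) ≤ |G : J| θ(1)`. As `H ∩ ker χ ≤ ker θ`, also
`|H : ker θ| ≤ |H : H ∩ ker χ| = |J : ker χ|`, and multiplying gives
`|H : ker θ| χ(1) ≤ |G : ker χ| θ(1)`.
-/

open Module LinearMap

theorem Nat.div_le_div_of_mul_le_mul_of_pos {a b c d : ℕ} (hd : 0 < d) (h : a * d ≤ b * c) :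
    a / c ≤ b / d := by
  rcases c.eq_zero_or_pos with rfl | hc
  · simp
  rw [Nat.le_div_iff_mul_le hd]
  refine Nat.le_of_mul_le_mul_right ?_ hc
  calc a / c * d * c = a / c * c * d := by ring
    _ ≤ a * d := Nat.mul_le_mul_right d (Nat.div_mul_le_self a c)
    _ ≤ b * c := h

theorem Subgroup.relIndex_mul_index_sup {G : Type*} [Group G] (H N : Subgroup G) [N.Normal] :
    N.relIndex H * (H ⊔ N).index = N.index := by
  rw [← relIndex_sup_right, relIndex_mul_index le_sup_right]

theorem Submodule.finrank_iSup_le_sum {K M ι : Type*} [Field K] [AddCommGroup M] [Module K M]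
    [FiniteDimensional K M] [Fintype ι] (p : ι → Submodule K M) :
    finrank K ↥(⨆ i, p i) ≤ ∑ i, finrank K (p i) := by
  classical
  rw [← Finset.sup_univ_eq_iSup]
  induction (Finset.univ : Finset ι) using Finset.induction_on with
  | empty => simp
  | insert a s ha ih =>
    rw [Finset.sup_insert, Finset.sum_insert ha]
    exact (finrank_add_le_finrank_add_finrank _ _).trans (Nat.add_le_add_left ih _)

namespace Module.End

variable {K V : Type*} [Field K] [AddCommGroup V] [Module K V]

theorem apply_eq_inv_smul_of_mem_eigenspace {A B : End K V} (hBA : B * A = 1) {μ : K}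
    {x : V} (hx : x ∈ A.eigenspace μ) : B x = μ⁻¹ • x := by
  rw [mem_eigenspace_iff] at hx
  have hBx : x = μ • B x := by
    rw [← map_smul, ← hx, ← mul_apply, hBA, one_apply]
  rcases eq_or_ne μ 0 with rfl | hμ
  · rw [zero_smul] at hBx
    simp [hBx]
  · rw [hBx, smul_smul, inv_mul_cancel₀ hμ, one_smul, ← hBx]

variable [FiniteDimensional K V]

theorem iSup_eigenspace_eq_top_of_pow_eq_one [IsAlgClosed K] {A : End K V} {m : ℕ}
    (hm : (m : K) ≠ 0) (hA : A ^ m = 1) : ⨆ μ, A.eigenspace μ = ⊤ := by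
  have hss : A.IsSemisimple := isSemisimple_of_squarefree_aeval_eq_zero
    (Polynomial.separable_X_pow_sub_C 1 hm one_ne_zero).squarefree (by simp [hA])
  simpa only [hss.isFinitelySemisimple.maxGenEigenspace_eq_eigenspace]
    using A.iSup_maxGenEigenspace_eq_top

theorem trace_eq_sum_of_iSup_eigenspace_eq_top {A B : End K V}
    (hA : ⨆ μ, A.eigenspace μ = ⊤) (c : K → K)
    (hB : ∀ μ, ∀ x ∈ A.eigenspace μ, B x = c μ • x) (s : Finset K)
    (hs : ∀ μ, A.eigenspace μ ≠ ⊥ → μ ∈ s) :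
    trace K V B = ∑ μ ∈ s, c μ * finrank K (A.eigenspace μ) := by
  classical
  have hint : DirectSum.IsInternal A.eigenspace :=
    (DirectSum.isInternal_submodule_iff_iSupIndep_and_iSup_eq_top _).mpr
      ⟨A.eigenspaces_iSupIndep, hA⟩
  have hfin : {μ | A.eigenspace μ ≠ ⊥}.Finite :=
    WellFoundedGT.finite_ne_bot_of_iSupIndep A.eigenspaces_iSupIndep
  have hmaps (μ : K) : Set.MapsTo B (A.eigenspace μ) (A.eigenspace μ) := fun x hx ↦ by
    simpa [hB μ x hx] using Submodule.smul_mem _ (c μ) hx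
  have hscalar (μ : K) : B.restrict (hmaps μ) = c μ • 1 := by
    ext ⟨x, hx⟩
    exact hB μ x hx
  rw [trace_eq_sum_trace_restrict' hint hfin hmaps]
  simp_rw [hscalar, map_smul, trace_one, smul_eq_mul]
  refine Finset.sum_subset (fun μ hμ ↦ hs μ (hfin.mem_toFinset.mp hμ)) fun μ _ hμ ↦ ?_
  simp only [Set.Finite.mem_toFinset, Set.mem_ofPred_eq, not_not] at hμ
  rw [hμ, finrank_bot, Nat.cast_zero, mul_zero]

end Module.End

/-- The eigenvalues of `A` are `m`-th roots of unity, for which `conj μ = μ⁻¹`. -/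
theorem Module.End.star_trace_eq_trace_of_pow_eq_one {V : Type*} [AddCommGroup V]
    [Module ℂ V] [FiniteDimensional ℂ V] {A B : End ℂ V} {m : ℕ} (hm : m ≠ 0)
    (hA : A ^ m = 1) (hBA : B * A = 1) : starRingEnd ℂ (trace ℂ V A) = trace ℂ V B := by
  have hA' := iSup_eigenspace_eq_top_of_pow_eq_one (Nat.cast_ne_zero.mpr hm) hA
  have hs (μ : ℂ) (hμ : A.eigenspace μ ≠ ⊥) : μ ∈ (Polynomial.nthRoots m (1 : ℂ)).toFinset := by
    obtain ⟨x, hx⟩ := HasEigenvalue.exists_hasEigenvector hμ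
    have hx' := hx.pow_apply m
    rw [hA, one_apply, eq_comm, ← one_smul ℂ x, smul_smul, mul_one] at hx'
    rw [Multiset.mem_toFinset, Polynomial.mem_nthRoots (Nat.pos_of_ne_zero hm)]
    exact smul_left_injective ℂ hx.2 hx'
  rw [trace_eq_sum_of_iSup_eigenspace_eq_top hA' id (fun μ x hx ↦ mem_eigenspace_iff.mp hx) _ hs,
    trace_eq_sum_of_iSup_eigenspace_eq_top hA' _
      (fun μ x hx ↦ apply_eq_inv_smul_of_mem_eigenspace hBA hx) _ hs, map_sum]
  refine Finset.sum_congr rfl fun μ hμ ↦ ?_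
  rw [Multiset.mem_toFinset, Polynomial.mem_nthRoots (Nat.pos_of_ne_zero hm)] at hμ
  rw [map_mul, map_natCast, id_eq,
    ← Complex.inv_eq_conj (Complex.norm_eq_one_of_pow_eq_one hμ hm)]

namespace Representation

section Stabilizer

variable {k G V : Type*} [Semiring k] [Group G] [AddCommMonoid V] [Module k V]
  (ρ : Representation k G V)

def stabilizer (W : Submodule k V) : Subgroup G where
  carrier := {g | W.map (ρ g) = W}
  one_mem' := by simp [Module.End.one_eq_id]
  mul_mem' {a b} ha hb := by
    simp only [Set.mem_ofPred_eq, map_mul, Module.End.mul_eq_comp, Submodule.map_comp] at *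
    rw [hb, ha]
  inv_mem' {a} ha := by
    simp only [Set.mem_ofPred_eq] at *
    conv_lhs => rw [← ha]
    rw [← Submodule.map_comp, ← Module.End.mul_eq_comp, ← map_mul, inv_mul_cancel, map_one,
      Module.End.one_eq_id, Submodule.map_id]

theorem mem_stabilizer {W : Submodule k V} {g : G} : g ∈ ρ.stabilizer W ↔ W.map (ρ g) = W :=
  Iff.rfl

end Stabilizer

theorem finrank_map_apply {k G V : Type*} [Field k] [Group G] [AddCommGroup V] [Module k V]
    (ρ : Representation k G V) (g : G) (W : Submodule k V) :
    finrank k (W.map (ρ g)) = finrank k W :=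
  (Submodule.equivMapOfInjective _ (ρ.apply_bijective g).1 W).finrank_eq.symm

end Representation

namespace FDRep

theorem star_character {G : Type*} [Group G] [Finite G] (V : FDRep ℂ G) (g : G) :
    starRingEnd ℂ (V.character g) = V.character g⁻¹ :=
  Module.End.star_trace_eq_trace_of_pow_eq_one Nat.card_pos.ne'
    (by rw [← map_pow, pow_card_eq_one', map_one]) (by rw [← map_mul, inv_mul_cancel, map_one])

section Monoid

variable {k G : Type*} [Field k] [Monoid G]

theorem hom_hom_hom_ne_zero {V W : FDRep k G} {f : V ⟶ W} (hf : f ≠ 0) : f.hom.hom.hom ≠ 0 :=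
  fun h ↦ hf (Action.Hom.ext (ObjectProperty.hom_ext _ (ModuleCat.hom_ext h)))

theorem finrank_pos_of_hom_ne_zero {V W : FDRep k G} {f : V ⟶ W} (hf : f ≠ 0) :
    0 < finrank k W :=
  Nat.pos_of_ne_zero fun h ↦
    hom_hom_hom_ne_zero hf (haveI := finrank_zero_iff.mp h; Subsingleton.elim _ _)

theorem injective_hom_of_simple {V W : FDRep k G} [Simple V] {f : V ⟶ W} (hf : f ≠ 0) :
    Function.Injective f.hom.hom.hom :=
  have := mono_of_nonzero_from_simple hf
  (ModuleCat.mono_iff_injective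
    ((forget₂ (FGModuleCat k) (ModuleCat k)).map ((Action.forget _ _).map f))).mp inferInstance

noncomputable def subrepresentationSubtype (V : FDRep k G) (σ : Subrepresentation V.ρ) :
    FDRep.of σ.toRepresentation ⟶ V where
  hom := ObjectProperty.homMk (ModuleCat.ofHom σ.toSubmodule.subtype)
  comm _ := rfl

instance (V : FDRep k G) (σ : Subrepresentation V.ρ) : Mono (V.subrepresentationSubtype σ) :=
  (Action.forget _ _).mono_of_mono_map <|
    (forget₂ (FGModuleCat k) (ModuleCat k)).mono_of_mono_map <|
      (ModuleCat.mono_iff_injective _).mpr Subtype.val_injective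

theorem subrepresentation_eq_top (V : FDRep k G) [Simple V] {σ : Subrepresentation V.ρ}
    (hσ : σ ≠ ⊥) : σ = ⊤ := by
  have hne : σ.toSubmodule ≠ ⊥ := fun h ↦ hσ (Subrepresentation.toSubmodule_injective h)
  obtain ⟨x, hx, hx0⟩ := Submodule.exists_mem_ne_zero_of_ne_bot hne
  have hι : V.subrepresentationSubtype σ ≠ 0 := fun h ↦ hx0 congr(($h).hom.hom.hom ⟨x, hx⟩)
  have := isIso_of_mono_of_nonzero hι
  refine Subrepresentation.toSubmodule_injective (Submodule.eq_top_of_finrank_eq ?_)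
  exact (isoToLinearEquiv (asIso (V.subrepresentationSubtype σ))).finrank_eq

end Monoid

theorem finrank_le_index_mul_finrank {k G : Type*} [Field k] [Group G] (V : FDRep k G)
    [Simple V] {W : Submodule k V} (hW : W ≠ ⊥) {J : Subgroup G} [J.FiniteIndex]
    (hJ : J ≤ Representation.stabilizer V.ρ W) : finrank k V ≤ J.index * finrank k W := by
  let σ : Subrepresentation V.ρ :=
    { toSubmodule := ⨆ g, W.map (V.ρ g)
      apply_mem_toSubmodule g x hx := by
        refine (?_ : (⨆ g', W.map (V.ρ g')).map (V.ρ g) ≤ _) (Submodule.mem_map_of_mem hx)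
        rw [Submodule.map_iSup]
        refine iSup_le fun g' ↦ ?_
        rw [← Submodule.map_comp, ← Module.End.mul_eq_comp, ← map_mul]
        exact le_iSup (fun g ↦ W.map (V.ρ g)) (g * g') }
  have hσ : σ ≠ ⊥ := by
    refine fun h ↦ hW (eq_bot_iff.mpr ?_)
    have hle := le_iSup (fun g ↦ W.map (V.ρ g)) 1
    rw [map_one, Module.End.one_eq_id, Submodule.map_id] at hle
    exact hle.trans (congrArg Subrepresentation.toSubmodule h).le
  have hcosets : ⨆ g, W.map (V.ρ g) = ⨆ c : G ⧸ J, W.map (V.ρ c.out) := by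
    refine le_antisymm (iSup_le fun g ↦ ?_)
      (iSup_le fun c ↦ le_iSup (fun g ↦ W.map (V.ρ g)) c.out)
    obtain ⟨j, hj⟩ := QuotientGroup.mk_out_eq_mul J g
    have : W.map (V.ρ g) = W.map (V.ρ (g : G ⧸ J).out) := by
      rw [hj, map_mul, Module.End.mul_eq_comp, Submodule.map_comp, (hJ j.2 : _ = W)]
    exact this ▸ le_iSup (fun c : G ⧸ J ↦ W.map (V.ρ c.out)) g
  have : Fintype (G ⧸ J) := Fintype.ofFinite _
  calc finrank k V = finrank k σ.toSubmodule := by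
        rw [V.subrepresentation_eq_top hσ]; exact (finrank_top k V).symm
    _ ≤ ∑ c : G ⧸ J, finrank k (W.map (V.ρ c.out)) := by
        rw [show σ.toSubmodule = _ from hcosets]; exact Submodule.finrank_iSup_le_sum _
    _ = J.index * finrank k W := by
        simp [Representation.finrank_map_apply, J.index_eq_card, Nat.card_eq_fintype_card]

end FDRep

section Frobenius

variable {G : Type} [Group G] [Finite G] (H : Subgroup G) (θ : FDRep ℂ H)

theorem innerChar_indChar [Fintype H] (ψ : G → ℂ) (hψ : ∀ g x, ψ (x * g * x⁻¹) = ψ g) :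
    innerChar G (indChar H θ) ψ =
      (Nat.card H : ℂ)⁻¹ * ∑ h : H, θ.character h * starRingEnd ℂ (ψ h) := by
  classical
  have : Fintype G := Fintype.ofFinite G
  have hconj (x : G) : ∑ g : G, (if h : x * g * x⁻¹ ∈ H then θ.character ⟨_, h⟩ else 0) *
      starRingEnd ℂ (ψ g) = ∑ h : H, θ.character h * starRingEnd ℂ (ψ h) := by
    rw [Fintype.sum_equiv (MulAut.conj x).toEquiv _
      (fun y ↦ (if h : y ∈ H then θ.character ⟨y, h⟩ else 0) * starRingEnd ℂ (ψ y))
      fun g ↦ by rw [MulEquiv.toEquiv_eq_coe, MulEquiv.coe_toEquiv, MulAut.conj_apply, hψ]]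
    simp only [dite_mul, zero_mul, Finset.sum_dite, Finset.sum_const_zero, add_zero]
    exact Fintype.sum_equiv (Equiv.subtypeEquivRight (by simp)) _ _ fun _ ↦ rfl
  simp only [innerChar, indChar, finsum_eq_sum_of_fintype, div_mul_eq_mul_div, Finset.sum_mul,
    ← Finset.sum_div]
  rw [Finset.sum_comm]
  simp only [hconj, Finset.sum_const, Finset.card_univ, nsmul_eq_mul, Nat.card_eq_fintype_card]
  field_simp

theorem innerChar_indChar_eq_finrank_hom (χ : FDRep ℂ G) :
    innerChar G (indChar H θ) χ.character = finrank ℂ (θ ⟶ FDRep.of (χ.ρ.comp H.subtype)) := by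
  have : Invertible (Nat.card H : ℂ) := invertibleOfNonzero (Nat.cast_ne_zero.mpr Nat.card_pos.ne')
  have : Fintype H := Fintype.ofFinite H
  rw [innerChar_indChar H θ _ χ.char_conj, ← FDRep.scalar_product_char_eq_finrank_equivariant]
  congr 1
  rw [← Fintype.sum_equiv (Equiv.inv H) _ _ fun h ↦ ?_]
  rw [FDRep.star_character, Equiv.inv_apply, InvMemClass.coe_inv, inv_inv, mul_comm]
  rfl

end Frobenius

theorem mem_charKer_iff {G : Type} [Group G] {V : FDRep ℂ G} {g : G} :
    g ∈ charKer V ↔ V.ρ g = 1 := by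
  rw [charKer, MonoidHom.mem_ker, ← Units.val_eq_one, Representation.asGroupHom_apply]

theorem index_charKer_mul_finrank_le {G : Type} [Group G] [Finite G] {H : Subgroup G}
    (θ : FDRep ℂ H) [Simple θ] (χ : FDRep ℂ G) [Simple χ]
    {f : θ ⟶ FDRep.of (χ.ρ.comp H.subtype)} (hf : f ≠ 0) :
    (charKer θ).index * finrank ℂ χ ≤ (charKer χ).index * finrank ℂ θ := by
  let φ : θ →ₗ[ℂ] χ := f.hom.hom.hom
  have hinj : Function.Injective φ := FDRep.injective_hom_of_simple hf
  have hcomm (h : H) : φ ∘ₗ θ.ρ h = χ.ρ h ∘ₗ φ := congr(($(f.comm h)).hom.hom)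
  have hH : H ≤ Representation.stabilizer χ.ρ (range φ) := fun h hh ↦ by
    rw [Representation.mem_stabilizer, ← range_comp, ← hcomm ⟨h, hh⟩,
      range_comp_of_range_eq_top _ (range_eq_top.mpr (Representation.apply_bijective θ.ρ _).2)]
  have hK : charKer χ ≤ Representation.stabilizer χ.ρ (range φ) := fun g hg ↦ by
    rw [Representation.mem_stabilizer, mem_charKer_iff.mp hg, Module.End.one_eq_id,
      Submodule.map_id]
  have hθχ : (charKer χ).subgroupOf H ≤ charKer θ := fun h hh ↦ by
    rw [Subgroup.mem_subgroupOf, mem_charKer_iff] at hh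
    rw [mem_charKer_iff]
    ext x
    apply hinj
    simpa [hh] using LinearMap.congr_fun (hcomm h) x
  have hdim : finrank ℂ χ ≤ (H ⊔ charKer χ).index * finrank ℂ θ := by
    have hW : range φ ≠ ⊥ := range_eq_bot.not.mpr (FDRep.hom_hom_hom_ne_zero hf)
    have := χ.finrank_le_index_mul_finrank hW (sup_le hH hK)
    rwa [finrank_range_of_inj hinj] at this
  have hidx : (charKer θ).index ≤ (charKer χ).relIndex H :=
    Nat.le_of_dvd (Nat.pos_of_ne_zero Subgroup.index_ne_zero_of_finite)
      (Subgroup.index_dvd_of_le hθχ)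
  have : (charKer χ).Normal := MonoidHom.normal_ker _
  calc (charKer θ).index * finrank ℂ χ
      ≤ (charKer χ).relIndex H * ((H ⊔ charKer χ).index * finrank ℂ θ) :=
        Nat.mul_le_mul hidx hdim
    _ = (charKer χ).index * finrank ℂ θ := by
        rw [← mul_assoc, Subgroup.relIndex_mul_index_sup]

theorem stmt_5 {G : Type} [Group G] [Finite G] (H : Subgroup G)
    (θ : FDRep ℂ ↥H) (hθ : Simple θ) (χ : FDRep ℂ G) (hχ : Simple χ)
    (hcons : innerChar G (indChar H θ) χ.character ≠ 0) :
    codeg θ ≤ codeg χ := by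
  rw [innerChar_indChar_eq_finrank_hom, Nat.cast_ne_zero, ← Nat.pos_iff_ne_zero,
    finrank_pos_iff_exists_ne_zero] at hcons
  obtain ⟨f, hf⟩ := hcons
  have hχ_pos := FDRep.finrank_pos_of_hom_ne_zero hf
  exact Nat.div_le_div_of_mul_le_mul_of_pos hχ_pos (index_charKer_mul_finrank_le θ χ hf)
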